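/- arXiv:2311.00005 — 5 statements merged into one kernel-verified Lean document; each statement's English description precedes it below -/
import Mathlib

section
/- If f : ℕ → ℝ satisfies ∑_{n ≤ x} f(n) = c·x + O(g(x)) as x → ∞ with c ≠ 0 and g monotone nonnegative, then ∑_{n ≤ x} n·f(n) = (c/2)·x² + O(x·g(x)) + O(∫_1^x g(t) dt) + O(1). -/
/-!
Abel summation with weight `t` gives `∑_{n ≤ x} n f(n) = x S(x) - ∫₁ˣ S(t) dt` for the summatory
function `S`. Writing `S(t) = c t + R(t)` turns this into
`(c/2) x² + x R(x) - ∫₁ˣ R(t) dt + c/2`. Here `x R(x) = O(x g(x))`, and once `|R| ≤ C g` holds on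
`[X, ∞)`, the integral `∫₁ˣ R` is a constant (`∫₁^X R`) plus `O(∫₁ˣ g)` because `g ≥ 0`.
-/

open Filter Finset Asymptotics MeasureTheory

theorem sum_Icc_zero_eq_sum_Icc_one {M : Type*} [AddCommMonoid M] {F : ℕ → M} (hF : F 0 = 0)
    (n : ℕ) : ∑ k ∈ Icc 0 n, F k = ∑ k ∈ Icc 1 n, F k := by
  refine (sum_subset (Icc_subset_Icc_left zero_le_one) fun k hk hk' => ?_).symm
  obtain rfl : k = 0 := by simp_all
  exact hF

theorem integrableOn_sum_Icc_one_floor (f : ℕ → ℝ) {a : ℝ} (ha : 0 ≤ a) (b : ℝ) :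
    IntegrableOn (fun t => ∑ n ∈ Icc 1 ⌊t⌋₊, f n) (Set.Icc a b) := by
  simpa only [Pi.one_apply, one_mul] using
    integrableOn_mul_sum_Icc f (m := 1) ha (integrableOn_const (C := (1 : ℝ)) (by simp))

theorem sum_Icc_one_floor_natCast_mul_eq (f : ℕ → ℝ) {x : ℝ} (hx : 1 ≤ x) :
    ∑ n ∈ Icc 1 ⌊x⌋₊, (n : ℝ) * f n =
      x * ∑ n ∈ Icc 1 ⌊x⌋₊, f n - ∫ t in (1 : ℝ)..x, ∑ n ∈ Icc 1 ⌊t⌋₊, f n := by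
  -- Mathlib's Abel summation sums from `0`, so `f 0` is replaced by `0`.
  set f₀ := Function.update f 0 0
  have hf₀ : ∀ k, k ≠ 0 → f₀ k = f k := fun k hk => Function.update_of_ne hk _ _
  have hshift : ∀ n : ℕ, ∑ k ∈ Icc 0 n, f₀ k = ∑ k ∈ Icc 1 n, f k := fun n => by
    rw [sum_Icc_zero_eq_sum_Icc_one (Function.update_self 0 0 f)]
    exact sum_congr rfl fun k hk => hf₀ k (by simp at hk; omega)
  have abel := sum_mul_eq_sub_integral_mul₀ f₀ (f := fun t => t)
    (Function.update_self 0 0 f) x (fun t _ => differentiableAt_id)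
    (by simpa only [deriv_id''] using integrableOn_const (by simp))
  simp only [deriv_id'', one_mul, hshift] at abel
  rw [intervalIntegral.integral_of_le hx, ← abel, sum_Icc_zero_eq_sum_Icc_one (by simp)]
  exact sum_congr rfl fun k hk => by rw [hf₀ k (by simp at hk; omega)]

theorem sum_Icc_one_floor_natCast_mul_eq_sq_add (f : ℕ → ℝ) (c : ℝ) {x : ℝ} (hx : 1 ≤ x) :
    ∑ n ∈ Icc 1 ⌊x⌋₊, (n : ℝ) * f n =
      c / 2 * x ^ 2 + x * (∑ n ∈ Icc 1 ⌊x⌋₊, f n - c * x)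
        - (∫ t in (1 : ℝ)..x, ∑ n ∈ Icc 1 ⌊t⌋₊, f n - c * t) + c / 2 := by
  have hS : IntervalIntegrable (fun t => ∑ n ∈ Icc 1 ⌊t⌋₊, f n) volume 1 x :=
    (intervalIntegrable_iff_integrableOn_Icc_of_le hx).mpr
      (integrableOn_sum_Icc_one_floor f zero_le_one x)
  have hlin : IntervalIntegrable (fun t => c * t) volume 1 x :=
    (continuous_const.mul continuous_id).intervalIntegrable 1 x
  rw [sum_Icc_one_floor_natCast_mul_eq f hx, intervalIntegral.integral_sub hS hlin,
    intervalIntegral.integral_const_mul, integral_id]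
  ring

theorem exists_intervalIntegral_sub_const_isBigO {R g : ℝ → ℝ} {a : ℝ}
    (hR : ∀ b, IntegrableOn R (Set.Icc a b)) (hg : ∀ b, IntegrableOn g (Set.Icc a b))
    (hg_nonneg : ∀ x, 0 ≤ g x) (h : R =O[atTop] g) :
    ∃ K, (fun x => (∫ t in a..x, R t) - K) =O[atTop] fun x => ∫ t in a..x, g t := by
  have hR' : ∀ {b}, a ≤ b → IntervalIntegrable R volume a b := fun hb =>
    (intervalIntegrable_iff_integrableOn_Icc_of_le hb).mpr (hR _)
  have hg' : ∀ {b}, a ≤ b → IntervalIntegrable g volume a b := fun hb =>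
    (intervalIntegrable_iff_integrableOn_Icc_of_le hb).mpr (hg _)
  obtain ⟨C, hC₀, hC⟩ := h.exists_nonneg
  obtain ⟨X, hX⟩ := eventually_atTop.mp (hC.bound.and (eventually_ge_atTop a))
  refine ⟨∫ t in a..X, R t, IsBigO.of_bound C ?_⟩
  filter_upwards [eventually_ge_atTop X] with x hXx
  have haX := (hX X le_rfl).2
  have hax := haX.trans hXx
  have hRg : ∀ t ∈ Set.Ioc X x, ‖R t‖ ≤ C * g t := fun t ht => by
    simpa only [Real.norm_of_nonneg (hg_nonneg t)] using (hX t ht.1.le).1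
  rw [intervalIntegral.integral_interval_sub_left (hR' hax) (hR' haX),
    Real.norm_of_nonneg (intervalIntegral.integral_nonneg hax fun t _ => hg_nonneg t)]
  calc ‖∫ t in X..x, R t‖
      ≤ ∫ t in X..x, C * g t := intervalIntegral.norm_integral_le_of_norm_le hXx
        (ae_of_all _ hRg) (((hg' haX).symm.trans (hg' hax)).const_mul C)
    _ = C * ∫ t in X..x, g t := intervalIntegral.integral_const_mul C g
    _ ≤ C * ∫ t in a..x, g t := by
      gcongr
      exact intervalIntegral.integral_mono_interval haX hXx le_rfl
        (ae_of_all _ fun t => hg_nonneg t) (hg' hax)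

theorem stmt_1_general (f : ℕ → ℝ) (g : ℝ → ℝ) (c : ℝ)
    (hg_mono : Monotone g) (hg_nonneg : ∀ x, 0 ≤ g x)
    (h : (fun x : ℝ => (∑ n ∈ Finset.Icc 1 ⌊x⌋₊, f n) - c * x) =O[atTop] g) :
    ∃ e₁ e₂ e₃ : ℝ → ℝ,
      (∀ x : ℝ, (∑ n ∈ Finset.Icc 1 ⌊x⌋₊, (n : ℝ) * f n)
          = (c / 2) * x ^ 2 + e₁ x + e₂ x + e₃ x) ∧
      e₁ =O[atTop] (fun x => x * g x) ∧
      e₂ =O[atTop] (fun x => ∫ t in (1:ℝ)..x, g t) ∧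
      e₃ =O[atTop] (fun _ => (1 : ℝ)) := by
  set R : ℝ → ℝ := fun x => (∑ n ∈ Icc 1 ⌊x⌋₊, f n) - c * x
  have hR_int : ∀ b, IntegrableOn R (Set.Icc 1 b) := fun b =>
    (integrableOn_sum_Icc_one_floor f zero_le_one b).sub
      (continuous_const.mul continuous_id).integrableOn_Icc
  obtain ⟨K, hK⟩ := exists_intervalIntegral_sub_const_isBigO hR_int
    (fun b => hg_mono.locallyIntegrable.integrableOn_isCompact isCompact_Icc) hg_nonneg h
  refine ⟨fun x => x * R x, fun x => -((∫ t in (1 : ℝ)..x, R t) - K),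
    fun x => (∑ n ∈ Icc 1 ⌊x⌋₊, (n : ℝ) * f n) - c / 2 * x ^ 2 - x * R x
      + ((∫ t in (1 : ℝ)..x, R t) - K),
    fun x => by ring, (isBigO_refl _ _).mul h, hK.neg_left, ?_⟩
  refine (isBigO_const_const (c / 2 - K) one_ne_zero atTop).congr' ?_ EventuallyEq.rfl
  filter_upwards [eventually_ge_atTop 1] with x hx
  rw [sum_Icc_one_floor_natCast_mul_eq_sq_add f c hx]
  ring

theorem stmt_1 (f : ℕ → ℝ) (g : ℝ → ℝ) (c : ℝ) (hc : c ≠ 0)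
    (hg_mono : Monotone g) (hg_nonneg : ∀ x, 0 ≤ g x)
    (h : (fun x : ℝ => (∑ n ∈ Finset.Icc 1 ⌊x⌋₊, f n) - c * x) =O[atTop] g) :
    ∃ e₁ e₂ e₃ : ℝ → ℝ,
      (∀ x : ℝ, (∑ n ∈ Finset.Icc 1 ⌊x⌋₊, (n : ℝ) * f n)
          = (c / 2) * x ^ 2 + e₁ x + e₂ x + e₃ x) ∧
      e₁ =O[atTop] (fun x => x * g x) ∧
      e₂ =O[atTop] (fun x => ∫ t in (1:ℝ)..x, g t) ∧
      e₃ =O[atTop] (fun _ => (1 : ℝ)) :=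
  stmt_1_general f g c hg_mono hg_nonneg h
end

section
/- If f : ℕ → ℝ satisfies (1/x)·∑_{n ≤ x} f(n) → c as x → ∞ with c ≠ 0, then for every real s ≥ 1, ∑_{n ≤ x} n^s · f(n) ~ (c/(s+1))·x^{s+1} as x → ∞. -/
/-!
Write `f = c + g`. The partial sums of `g` are `o(N)`, and Abel summation against the monotone
weights `n ^ s` turns this into `∑_{n ≤ N} n ^ s g(n) = o(N ^ (s + 1))`. The main term
`c ∑_{n ≤ N} n ^ s` is asymptotic to `c N ^ (s + 1) / (s + 1)` by comparison with `∫ x ^ s`, and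
replacing `N = ⌊x⌋₊` by `x` only costs a factor tending to `1`.
-/

open Filter Finset Asymptotics Topology

theorem Asymptotics.IsEquivalent.of_le_of_le {α : Type*} {l : Filter α} {u v w : α → ℝ}
    (hvu : ∀ᶠ x in l, v x ≤ u x) (huw : ∀ᶠ x in l, u x ≤ w x) (hwv : w ~[l] v) : u ~[l] v := by
  refine IsLittleO.isEquivalent (IsBigO.trans_isLittleO (IsBigO.of_bound 1 ?_) hwv.isLittleO)
  filter_upwards [hvu, huw] with x hvx hux
  simp only [Pi.sub_apply, Real.norm_eq_abs, one_mul]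
  exact abs_le_abs (by linarith) (by linarith)

theorem sum_Icc_mul_eq_sub_sum_range {R : Type*} [CommRing R] (w a : ℕ → R) (N : ℕ) :
    ∑ n ∈ Icc 1 N, w n * a n =
      w N * ∑ n ∈ Icc 1 N, a n - ∑ n ∈ range N, (∑ k ∈ Icc 1 n, a k) * (w (n + 1) - w n) := by
  induction N with
  | zero => simp
  | succ N ih =>
    rw [sum_Icc_succ_top (by omega), ih, sum_range_succ, sum_Icc_succ_top (by omega) a]
    ring

theorem isLittleO_sum_Icc_mul {w a : ℕ → ℝ} (hw : Monotone w) (hw0 : ∀ n, 0 ≤ w n)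
    (hwN : Tendsto (fun N : ℕ => (N : ℝ) * w N) atTop atTop)
    (ha : (fun N => ∑ n ∈ Icc 1 N, a n) =o[atTop] fun N => (N : ℝ)) :
    (fun N => ∑ n ∈ Icc 1 N, w n * a n) =o[atTop] fun N => (N : ℝ) * w N := by
  set A : ℕ → ℝ := fun N => ∑ n ∈ Icc 1 N, a n
  -- `G` telescopes to `N * w N` and `n * (w (n + 1) - w n) ≤ G n`, so `A n = o(n)` makes the
  -- Abel remainder `∑ A n * (w (n + 1) - w n)` negligible against `∑ G n`.
  set G : ℕ → ℝ := fun n => (n + 1 : ℝ) * w (n + 1) - n * w n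
  have hG : ∀ n, G n = n * (w (n + 1) - w n) + w (n + 1) := fun n => by ring
  have hΔ : ∀ n, 0 ≤ w (n + 1) - w n := fun n => sub_nonneg.mpr (hw n.le_succ)
  have hG0 : 0 ≤ G := fun n => by
    rw [hG]
    have := hΔ n
    have := hw0 (n + 1)
    positivity
  have hsumG : ∀ N, ∑ n ∈ range N, G n = N * w N := fun N => by
    have := sum_range_sub (fun n => (n : ℝ) * w n) N
    push_cast at this
    simpa [G] using this
  have hlast : (fun N => w N * A N) =o[atTop] fun N => (N : ℝ) * w N := by
    simpa only [mul_comm (w _)] using (isBigO_refl w atTop).mul_isLittleO ha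
  have hsmall : (fun n => A n * (w (n + 1) - w n)) =o[atTop] G := by
    refine isLittleO_iff.mpr fun ε hε => ?_
    filter_upwards [isLittleO_iff.mp ha hε] with n hn
    rw [Real.norm_of_nonneg (hG0 n), hG, norm_mul, Real.norm_of_nonneg (hΔ n)]
    rw [Real.norm_natCast] at hn
    have := hΔ n
    have := hw0 (n + 1)
    nlinarith
  have hrest := hsmall.sum_range hG0 (by simpa only [hsumG] using hwN)
  simp only [hsumG] at hrest
  simpa only [sum_Icc_mul_eq_sub_sum_range w a] using hlast.sub hrest

theorem isEquivalent_sum_Icc_rpow {s : ℝ} (hs : 0 ≤ s) :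
    (fun N : ℕ => ∑ n ∈ Icc 1 N, (n : ℝ) ^ s) ~[atTop] fun N => (N : ℝ) ^ (s + 1) / (s + 1) := by
  have hmono : MonotoneOn (fun x : ℝ => x ^ s) (Set.Ici 0) := fun x hx y _ hxy =>
    Real.rpow_le_rpow hx hxy hs
  have hint : ∀ N : ℕ, ∫ x in (0 : ℝ)..N, x ^ s = (N : ℝ) ^ (s + 1) / (s + 1) := fun N => by
    rw [integral_rpow (Or.inl (by linarith)), Real.zero_rpow (by linarith), sub_zero]
  refine IsEquivalent.of_le_of_le (w := fun N : ℕ => ((N + 1 : ℕ) : ℝ) ^ (s + 1) / (s + 1))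
    (Eventually.of_forall fun N => ?_) (Eventually.of_forall fun N => ?_) ?_
  · have := (hmono.mono Set.Icc_subset_Ici_self).integral_le_sum (x₀ := 0) (a := N)
    rw [zero_add, hint] at this
    refine this.trans_eq ?_
    rw [← Ico_add_one_right_eq_Icc, sum_Ico_eq_sum_range, add_tsub_cancel_right]
    simp [add_comm]
  · have := (hmono.mono Set.Icc_subset_Ici_self).sum_le_integral (x₀ := 0) (a := N + 1)
    rw [zero_add, hint] at this
    refine le_trans ?_ this
    simp only [zero_add]
    refine sum_le_sum_of_subset_of_nonneg (fun n hn => ?_) fun n _ _ => by positivity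
    simp only [mem_Icc, mem_range] at hn ⊢
    omega
  · have hsucc : (fun N : ℕ => ((N + 1 : ℕ) : ℝ)) ~[atTop] fun N => (N : ℝ) := by
      simpa only [Nat.cast_succ] using IsEquivalent.refl.add_const_of_norm_tendsto_atTop
        (tendsto_norm_atTop_atTop.comp tendsto_natCast_atTop_atTop)
    exact (hsucc.rpow fun N => N.cast_nonneg).div IsEquivalent.refl

theorem isLittleO_sum_Icc_sub_of_tendsto {f : ℕ → ℝ} {c : ℝ}
    (h : Tendsto (fun x : ℝ => (1 / x) * ∑ n ∈ Icc 1 ⌊x⌋₊, f n) atTop (𝓝 c)) :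
    (fun N : ℕ => ∑ n ∈ Icc 1 N, (f n - c)) =o[atTop] fun N => (N : ℝ) := by
  have hN := (h.comp tendsto_natCast_atTop_atTop).sub_const c
  rw [sub_self] at hN
  refine (isLittleO_iff_tendsto fun N hN0 => by simp_all).mpr (hN.congr' ?_)
  filter_upwards [eventually_ne_atTop 0] with N hN0
  simp only [one_div, Function.comp_apply, Nat.floor_natCast, sum_sub_distrib, sum_const,
    Nat.card_Icc, add_tsub_cancel_right, nsmul_eq_mul]
  field_simp

theorem isEquivalent_sum_Icc_rpow_mul {f : ℕ → ℝ} {c s : ℝ} (hc : c ≠ 0) (hs : 0 ≤ s)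
    (hf : (fun N : ℕ => ∑ n ∈ Icc 1 N, (f n - c)) =o[atTop] fun N => (N : ℝ)) :
    (fun N : ℕ => ∑ n ∈ Icc 1 N, (n : ℝ) ^ s * f n) ~[atTop]
      fun N => c / (s + 1) * (N : ℝ) ^ (s + 1) := by
  have hmain : (fun N : ℕ => c * ∑ n ∈ Icc 1 N, (n : ℝ) ^ s) ~[atTop]
      fun N => c / (s + 1) * (N : ℝ) ^ (s + 1) := by
    refine ((IsEquivalent.refl (u := fun _ : ℕ => c)).mul
      (isEquivalent_sum_Icc_rpow hs)).congr_right (Eventually.of_forall fun N => ?_)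
    simp only [Pi.mul_apply]
    ring
  have hs1 : 0 < s + 1 := by linarith
  have hpow : ∀ N : ℕ, (N : ℝ) * (N : ℝ) ^ s = (N : ℝ) ^ (s + 1) := fun N =>
    (mul_comm _ _).trans (Real.rpow_add_one' N.cast_nonneg hs1.ne').symm
  have herr : (fun N : ℕ => ∑ n ∈ Icc 1 N, (n : ℝ) ^ s * (f n - c)) =o[atTop]
      fun N => c / (s + 1) * (N : ℝ) ^ (s + 1) := by
    refine (isLittleO_sum_Icc_mul (w := fun n => (n : ℝ) ^ s) (fun m n hmn => ?_)
      (fun n => by positivity) ?_ hf).trans_isBigO ?_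
    · exact Real.rpow_le_rpow m.cast_nonneg (by exact_mod_cast hmn) hs
    · simpa only [hpow, Function.comp_def] using
        (tendsto_rpow_atTop hs1).comp tendsto_natCast_atTop_atTop
    · simpa only [hpow] using isBigO_self_const_mul (div_ne_zero hc hs1.ne') _ atTop
  refine (hmain.add_isLittleO herr).congr_left (Eventually.of_forall fun N => ?_)
  simp only [Pi.add_apply, mul_sum, ← sum_add_distrib]
  exact sum_congr rfl fun n _ => by ring

theorem stmt_2 (f : ℕ → ℝ) (c : ℝ) (hc : c ≠ 0)
    (h : Tendsto (fun x : ℝ => (1 / x) * ∑ n ∈ Finset.Icc 1 ⌊x⌋₊, f n) atTop (nhds c)) :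
    ∀ s : ℝ, 1 ≤ s →
      Tendsto (fun x : ℝ => (∑ n ∈ Finset.Icc 1 ⌊x⌋₊, (n : ℝ) ^ s * f n)
        / ((c / (s + 1)) * x ^ (s + 1))) atTop (nhds 1) := by
  intro s hs
  have hfloor : (fun x : ℝ => c / (s + 1) * (⌊x⌋₊ : ℝ) ^ (s + 1)) ~[atTop]
      fun x => c / (s + 1) * x ^ (s + 1) :=
    IsEquivalent.refl.mul (isEquivalent_nat_floor.symm.rpow fun x => (⌊x⌋₊).cast_nonneg).symm
  refine (isEquivalent_iff_tendsto_one ?_).mp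
    (((isEquivalent_sum_Icc_rpow_mul hc (by linarith)
      (isLittleO_sum_Icc_sub_of_tendsto h)).comp_tendsto tendsto_nat_floor_atTop).trans hfloor)
  filter_upwards [eventually_gt_atTop 0] with x hx
  have : 0 < s + 1 := by linarith
  positivity
end

section
/- If f : ℕ → ℝ and the series ∑_{n=1}^∞ f(n)/n^s converges for a real s ≥ 1, then the average value of f(n)/n^{s−1} tends to zero: lim_{x→∞} (1/x) ∑_{n ≤ x} f(n)/n^{s−1} = 0. -/
open Filter Finset Topology

/-
For `n ≥ 1` we have `f n / n ^ (s - 1) = n • (f n / n ^ s)`, so the claim is Kronecker's lemma: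
if `∑ aₙ` converges then `(1/N) ∑_{n ≤ N} n aₙ → 0`. Summation by parts writes
`∑_{n ≤ N} n aₙ = (N + 1) S_N - ∑_{i ≤ N} S_i` for the partial sums `S`, and after dividing by
`N + 1` both terms tend to the sum of the series, by Cesàro for the second one.
-/

section Kronecker

variable {E : Type*}

theorem sum_Icc_nsmul_eq_sub_sum_partialSums [AddCommGroup E] (a : ℕ → E) (N : ℕ) :
    ∑ n ∈ Icc 1 N, n • a n =
      (N + 1) • ∑ n ∈ Icc 1 N, a n - ∑ i ∈ range (N + 1), ∑ n ∈ Icc 1 i, a n := by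
  induction N with
  | zero => simp
  | succ N ih =>
    simp only [sum_Icc_succ_top (Nat.le_add_left 1 N), sum_range_succ, ih, smul_add, add_smul,
      one_smul]
    abel

variable [NormedAddCommGroup E] [NormedSpace ℝ E]

theorem tendsto_inv_add_one_smul_sum_Icc_nsmul {a : ℕ → E} {l : E}
    (h : Tendsto (fun N : ℕ => ∑ n ∈ Icc 1 N, a n) atTop (𝓝 l)) :
    Tendsto (fun N : ℕ => ((N : ℝ) + 1)⁻¹ • ∑ n ∈ Icc 1 N, n • a n) atTop (𝓝 0) := by
  have hcesaro : Tendsto (fun N : ℕ => ((N : ℝ) + 1)⁻¹ •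
      ∑ i ∈ range (N + 1), ∑ n ∈ Icc 1 i, a n) atTop (𝓝 l) := by
    refine (h.cesaro_smul.comp (tendsto_add_atTop_nat 1)).congr fun N => ?_
    rw [Function.comp_apply, Nat.cast_add_one]
  have hlim := h.sub hcesaro
  rw [sub_self] at hlim
  refine hlim.congr fun N => ?_
  have hN : ((N : ℝ) + 1) ≠ 0 := by positivity
  rw [sum_Icc_nsmul_eq_sub_sum_partialSums, smul_sub, ← Nat.cast_smul_eq_nsmul ℝ, smul_smul,
    Nat.cast_add_one, inv_mul_cancel₀ hN, one_smul]

theorem tendsto_inv_smul_nat_floor {u : ℕ → E}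
    (h : Tendsto (fun N : ℕ => ((N : ℝ) + 1)⁻¹ • u N) atTop (𝓝 0)) :
    Tendsto (fun x : ℝ => x⁻¹ • u ⌊x⌋₊) atTop (𝓝 0) := by
  have hratio : Tendsto (fun x : ℝ => ((⌊x⌋₊ : ℝ) + 1) / x) atTop (𝓝 1) := by
    simpa [add_div] using (tendsto_nat_floor_div_atTop (R := ℝ)).add tendsto_inv_atTop_zero
  have hlim := hratio.smul (h.comp tendsto_nat_floor_atTop)
  rw [smul_zero] at hlim
  refine hlim.congr fun x => ?_
  have hx : ((⌊x⌋₊ : ℝ) + 1) ≠ 0 := by positivity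
  rw [Function.comp_apply, smul_smul]
  congr 1
  field_simp

end Kronecker

theorem stmt_6_general (f : ℕ → ℝ) (s : ℝ) (l : ℝ)
    (h : Tendsto (fun N : ℕ => ∑ n ∈ Finset.Icc 1 N, f n / (n : ℝ) ^ s) atTop (nhds l)) :
    Tendsto (fun x : ℝ => (1 / x) * ∑ n ∈ Finset.Icc 1 ⌊x⌋₊, f n / (n : ℝ) ^ (s - 1))
      atTop (nhds 0) := by
  have hterm : ∀ N : ℕ, ∑ n ∈ Icc 1 N, f n / (n : ℝ) ^ (s - 1) =
      ∑ n ∈ Icc 1 N, n • (f n / (n : ℝ) ^ s) := fun N => sum_congr rfl fun n hn => by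
    have hn : (n : ℝ) ≠ 0 := Nat.cast_ne_zero.mpr (Nat.one_le_iff_ne_zero.mp (mem_Icc.mp hn).1)
    rw [Real.rpow_sub_one hn, nsmul_eq_mul]
    field_simp
  simpa only [one_div, smul_eq_mul, hterm] using
    tendsto_inv_smul_nat_floor (tendsto_inv_add_one_smul_sum_Icc_nsmul h)

theorem stmt_6 (f : ℕ → ℝ) (s : ℝ) (hs : 1 ≤ s) (l : ℝ)
    (h : Tendsto (fun N : ℕ => ∑ n ∈ Finset.Icc 1 N, f n / (n : ℝ) ^ s) atTop (nhds l)) :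
    Tendsto (fun x : ℝ => (1 / x) * ∑ n ∈ Finset.Icc 1 ⌊x⌋₊, f n / (n : ℝ) ^ (s - 1))
      atTop (nhds 0) :=
  stmt_6_general f s l h
end

section
/- Since the series ∑_{n=1}^∞ μ(n)/n converges, it follows that ∑_{n ≤ x} μ(n) = o(x) as x → ∞, where μ is the Möbius function. -/
/-!
Kronecker's lemma. With `S N = ∑_{n ≤ N} μ(n)/n`, summation by parts gives
`M(N) = N • S(N) - ∑_{k < N} S(k)`, so `M(N)/N` is `S(N)` minus the Cesàro mean of `S`, and both
tend to the same limit. Passing from `N` to `⌊x⌋₊` costs nothing since `⌊x⌋₊ ≤ |x|`.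
-/

open Filter Finset Asymptotics ArithmeticFunction Topology

section Kronecker

variable {E : Type*} [NormedAddCommGroup E] [NormedSpace ℝ E]

theorem sum_Icc_eq_smul_sub_sum_range (a : ℕ → E) (N : ℕ) :
    ∑ n ∈ Icc 1 N, a n =
      (N : ℝ) • ∑ n ∈ Icc 1 N, (n : ℝ)⁻¹ • a n
        - ∑ k ∈ range N, ∑ n ∈ Icc 1 k, (n : ℝ)⁻¹ • a n := by
  induction N with
  | zero => simp
  | succ N ih =>
    have hN : ((N + 1 : ℕ) : ℝ) ≠ 0 := by positivity
    rw [sum_Icc_succ_top (by omega), sum_Icc_succ_top (by omega), sum_range_succ, ih,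
      smul_add, smul_smul, mul_inv_cancel₀ hN, one_smul]
    push_cast
    rw [add_smul, one_smul]
    abel

theorem isLittleO_sum_Icc_of_tendsto_sum_Icc_inv_smul {a : ℕ → E} {l : E}
    (h : Tendsto (fun N : ℕ => ∑ n ∈ Icc 1 N, (n : ℝ)⁻¹ • a n) atTop (𝓝 l)) :
    (fun N : ℕ => ∑ n ∈ Icc 1 N, a n) =o[atTop] (fun N : ℕ => (N : ℝ)) := by
  have hmean : Tendsto (fun N : ℕ => (N : ℝ)⁻¹ • ∑ n ∈ Icc 1 N, a n) atTop (𝓝 0) := by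
    have := h.sub h.cesaro_smul
    rw [sub_self] at this
    refine this.congr' ?_
    filter_upwards [eventually_gt_atTop 0] with N hN
    have hN' : (N : ℝ) ≠ 0 := by positivity
    rw [sum_Icc_eq_smul_sub_sum_range a N, smul_sub, smul_smul, inv_mul_cancel₀ hN', one_smul]
  refine ((isBigO_refl (fun N : ℕ => (N : ℝ)) atTop).smul_isLittleO
    ((isLittleO_one_iff ℝ).2 hmean)).congr' ?_ (by simp)
  filter_upwards [eventually_gt_atTop 0] with N hN
  have hN' : (N : ℝ) ≠ 0 := by positivity
  rw [smul_smul, mul_inv_cancel₀ hN', one_smul]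

end Kronecker

theorem Asymptotics.IsLittleO.comp_natFloor {E : Type*} [Norm E] {u : ℕ → E}
    (hu : u =o[atTop] (fun N : ℕ => (N : ℝ))) :
    (fun x : ℝ => u ⌊x⌋₊) =o[atTop] (fun x : ℝ => x) := by
  refine (hu.comp_tendsto tendsto_nat_floor_atTop).trans_isBigO (isBigO_of_le _ fun x => ?_)
  rw [Function.comp_apply, Real.norm_natCast, Real.norm_eq_abs]
  rcases le_or_gt 0 x with hx | hx
  · exact (Nat.floor_le hx).trans (le_abs_self x)
  · simp [Nat.floor_of_nonpos hx.le]

theorem stmt_7 (l : ℝ)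
    (h : Tendsto (fun N : ℕ => ∑ n ∈ Finset.Icc 1 N, (moebius n : ℝ) / n) atTop (nhds l)) :
    (fun x : ℝ => ∑ n ∈ Finset.Icc 1 ⌊x⌋₊, (moebius n : ℝ))
      =o[atTop] (fun x : ℝ => x) := by
  simp_rw [div_eq_inv_mul, ← smul_eq_mul] at h
  exact (isLittleO_sum_Icc_of_tendsto_sum_Icc_inv_smul h).comp_natFloor
end

section
/- The limit lim_{x→∞} (1/x) ∑_{n ≤ x} (Ω(n) − ω(n)) exists and equals ∑_p 1/(p(p−1)), where the sum is over all primes p. -/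
/-!
Since `Ω(n) - ω(n) = ∑_{p prime} (v_p(n) - 1)` counts the prime powers `p ^ k` with `k ≥ 2`
dividing `n`, we get `∑_{n ≤ N} (Ω(n) - ω(n)) = ∑_p ∑_{k ≥ 2} ⌊N / p ^ k⌋`. After dividing by `x`,
each term tends to `p ^ (-k)` and is bounded by it; these bounds are summable, so Tannery's theorem
gives the limit `∑_p ∑_{k ≥ 2} p ^ (-k) = ∑_p 1 / (p (p - 1))`.
-/

open Filter Finset Topology

theorem inv_mul_natCast_floor_div_le {x : ℝ} (hx : 0 < x) (m : ℕ) :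
    x⁻¹ * ((⌊x⌋₊ / m : ℕ) : ℝ) ≤ (m : ℝ)⁻¹ := by
  rw [← Nat.floor_div_natCast, inv_mul_le_iff₀ hx, ← div_eq_mul_inv]
  exact Nat.floor_le (by positivity)

theorem tendsto_inv_mul_natCast_floor_div (m : ℕ) :
    Tendsto (fun x : ℝ => x⁻¹ * ((⌊x⌋₊ / m : ℕ) : ℝ)) atTop (𝓝 (m : ℝ)⁻¹) := by
  have lower : ∀ᶠ x : ℝ in atTop, (m : ℝ)⁻¹ - x⁻¹ ≤ x⁻¹ * ((⌊x⌋₊ / m : ℕ) : ℝ) := by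
    filter_upwards [eventually_gt_atTop 0] with x hx
    rw [← Nat.floor_div_natCast, mul_comm, ← div_eq_mul_inv, le_div_iff₀ hx]
    calc ((m : ℝ)⁻¹ - x⁻¹) * x = x / m - 1 := by field_simp
      _ ≤ _ := (Nat.sub_one_lt_floor (x / m)).le
  have upper : ∀ᶠ x : ℝ in atTop, x⁻¹ * ((⌊x⌋₊ / m : ℕ) : ℝ) ≤ (m : ℝ)⁻¹ := by
    filter_upwards [eventually_gt_atTop 0] with x hx
    exact inv_mul_natCast_floor_div_le hx m
  refine tendsto_of_tendsto_of_tendsto_of_le_of_le' ?_ tendsto_const_nhds lower upper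
  simpa using tendsto_const_nhds.sub tendsto_inv_atTop_zero (a := (m : ℝ)⁻¹)

theorem tendsto_inv_mul_tsum_natCast_floor_div {ι : Type*} (m : ι → ℕ)
    (hm : Summable fun i => (m i : ℝ)⁻¹) :
    Tendsto (fun x : ℝ => x⁻¹ * ∑' i, ((⌊x⌋₊ / m i : ℕ) : ℝ)) atTop
      (𝓝 (∑' i, (m i : ℝ)⁻¹)) := by
  simp_rw [← tsum_mul_left]
  refine tendsto_tsum_of_dominated_convergence hm
    (fun i => tendsto_inv_mul_natCast_floor_div (m i)) ?_
  filter_upwards [eventually_gt_atTop 0] with x hx i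
  rw [Real.norm_of_nonneg (by positivity)]
  exact inv_mul_natCast_floor_div_le hx (m i)

theorem tsum_inv_pow_add_two {a : ℝ} (ha : 1 < a) :
    ∑' j : ℕ, (a ^ (j + 2))⁻¹ = (a * (a - 1))⁻¹ := by
  have hr : a⁻¹ < 1 := inv_lt_one_of_one_lt₀ ha
  simp_rw [pow_add, mul_inv, ← inv_pow]
  rw [tsum_mul_right, tsum_geometric_of_lt_one (by positivity) hr]
  have : a - 1 ≠ 0 := by linarith
  field_simp

theorem summable_inv_prime_pow_add_two :
    Summable fun q : {p : ℕ // p.Prime} × ℕ => ((q.1 : ℝ) ^ (q.2 + 2))⁻¹ := by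
  have primes : Summable fun p : {p : ℕ // p.Prime} => ((p : ℝ) ^ 2)⁻¹ :=
    (Real.summable_nat_pow_inv.mpr one_lt_two).subtype _
  have geom : Summable fun j : ℕ => (2⁻¹ : ℝ) ^ j :=
    summable_geometric_of_lt_one (by norm_num) (by norm_num)
  refine (primes.mul_of_nonneg geom (fun _ => by positivity) fun _ => by positivity).of_nonneg_of_le
    (fun _ => by positivity) fun ⟨p, j⟩ => ?_
  have hp : (2 : ℝ) ≤ p := mod_cast p.2.two_le
  rw [pow_add, mul_inv, mul_comm, ← inv_pow, ← inv_pow]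
  gcongr

theorem tsum_inv_prime_pow_add_two :
    ∑' q : {p : ℕ // p.Prime} × ℕ, ((q.1 : ℝ) ^ (q.2 + 2))⁻¹ =
      ∑' p : {p : ℕ // p.Prime}, 1 / ((p : ℝ) * ((p : ℝ) - 1)) := by
  rw [summable_inv_prime_pow_add_two.tsum_prod]
  exact tsum_congr fun p =>
    (tsum_inv_pow_add_two (a := p) (mod_cast p.2.one_lt)).trans (one_div _).symm

theorem Nat.length_primeFactorsList_sub_card_primeFactors (n : ℕ) :
    n.primeFactorsList.length - n.primeFactors.card =
      ∑ p ∈ n.primeFactors, (n.factorization p - 1) := by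
  have hpos : ∀ p ∈ n.primeFactors, 1 ≤ n.factorization p := fun p hp =>
    Nat.pos_of_ne_zero (Finsupp.mem_support_iff.mp (n.support_factorization ▸ hp))
  rw [sum_tsub_distrib _ hpos, card_eq_sum_ones, ← ArithmeticFunction.cardFactors_apply,
    ArithmeticFunction.cardFactors_eq_sum_factorization, Finsupp.sum, Nat.support_factorization]

theorem Nat.factorization_sub_one_eq_card_filter_range {n p N : ℕ} (hp : p.Prime) (hn : n ≠ 0)
    (hnN : n ≤ N) : n.factorization p - 1 = #{j ∈ range N | p ^ (j + 2) ∣ n} := by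
  have hlt := n.factorization_lt (p := p) hn
  have : {j ∈ range N | p ^ (j + 2) ∣ n} = range (n.factorization p - 1) := by
    ext j
    simp only [mem_filter, mem_range, hp.pow_dvd_iff_le_factorization hn]
    omega
  rw [this, card_range]

/-- The pair `(p, j)` stands for the prime power `p ^ (j + 2)`. -/
def primePowerBox (N : ℕ) : Finset ({p : ℕ // p.Prime} × ℕ) :=
  (range (N + 1)).subtype Nat.Prime ×ˢ range N

theorem mem_primePowerBox_of_pow_le {N : ℕ} {q : {p : ℕ // p.Prime} × ℕ}
    (h : (q.1 : ℕ) ^ (q.2 + 2) ≤ N) : q ∈ primePowerBox N := by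
  obtain ⟨⟨p, hp⟩, j⟩ := q
  dsimp only at h
  have hp_le : p ≤ p ^ (j + 2) := Nat.le_self_pow (by omega) p
  have hj_lt : j < p ^ (j + 2) :=
    calc j < 2 ^ j := Nat.lt_two_pow_self
      _ ≤ p ^ j := Nat.pow_le_pow_left hp.two_le j
      _ ≤ p ^ (j + 2) := Nat.pow_le_pow_right hp.pos (by omega)
  simp only [primePowerBox, mem_product, mem_subtype, mem_range]
  omega

theorem length_primeFactorsList_sub_card_primeFactors_eq_sum_primePowerBox {n N : ℕ}
    (hn : n ≠ 0) (hnN : n ≤ N) :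
    n.primeFactorsList.length - n.primeFactors.card =
      ∑ q ∈ primePowerBox N, if (q.1 : ℕ) ^ (q.2 + 2) ∣ n then 1 else 0 := by
  rw [primePowerBox, sum_product,
    sum_subtype_eq_sum_filter (fun p => ∑ j ∈ range N, if p ^ (j + 2) ∣ n then 1 else 0),
    n.length_primeFactorsList_sub_card_primeFactors]
  have hcount : ∀ p ∈ {p ∈ range (N + 1) | p.Prime},
      ∑ j ∈ range N, (if p ^ (j + 2) ∣ n then 1 else 0) = n.factorization p - 1 := fun p hp => by
    rw [sum_boole, Nat.cast_id,
      Nat.factorization_sub_one_eq_card_filter_range (mem_filter.mp hp).2 hn hnN]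
  rw [sum_congr rfl hcount]
  refine sum_subset (fun p hp => ?_) fun p _ hp => ?_
  · simp only [mem_filter, mem_range]
    exact ⟨by linarith [Nat.le_of_mem_primeFactors hp], Nat.prime_of_mem_primeFactors hp⟩
  · rw [← n.support_factorization, Finsupp.notMem_support_iff] at hp
    rw [hp, zero_tsub]

theorem sum_Icc_length_primeFactorsList_sub_card_primeFactors (N : ℕ) :
    ∑ n ∈ Icc 1 N, (n.primeFactorsList.length - n.primeFactors.card) =
      ∑ q ∈ primePowerBox N, N / (q.1 : ℕ) ^ (q.2 + 2) := by
  rw [sum_congr rfl fun n hn => length_primeFactorsList_sub_card_primeFactors_eq_sum_primePowerBox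
    (Nat.one_le_iff_ne_zero.mp (mem_Icc.mp hn).1) (mem_Icc.mp hn).2, sum_comm]
  refine sum_congr rfl fun q _ => ?_
  rw [sum_boole, Nat.cast_id, ← Nat.Ioc_filter_dvd_card_eq_div]
  rfl

theorem tsum_natCast_div_prime_pow_add_two (N : ℕ) :
    ∑' q : {p : ℕ // p.Prime} × ℕ, ((N / (q.1 : ℕ) ^ (q.2 + 2) : ℕ) : ℝ) =
      ∑ n ∈ Icc 1 N, ((n.primeFactorsList.length : ℝ) - n.primeFactors.card) := by
  rw [tsum_eq_sum (s := primePowerBox N) fun q hq => ?_]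
  · rw [← Nat.cast_sum, ← sum_Icc_length_primeFactorsList_sub_card_primeFactors, Nat.cast_sum]
    exact sum_congr rfl fun n _ => Nat.cast_sub (List.toFinset_card_le _)
  · rw [Nat.div_eq_of_lt (not_le.mp (mt mem_primePowerBox_of_pow_le hq)), Nat.cast_zero]

theorem stmt_14 :
    Tendsto (fun x : ℝ => (1 / x) * ∑ n ∈ Finset.Icc 1 ⌊x⌋₊,
        ((n.primeFactorsList.length : ℝ) - n.primeFactors.card))
      atTop (nhds (∑' p : {p : ℕ // p.Prime}, 1 / ((p : ℝ) * ((p : ℝ) - 1)))) := by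
  have h := tendsto_inv_mul_tsum_natCast_floor_div
    (fun q : {p : ℕ // p.Prime} × ℕ => (q.1 : ℕ) ^ (q.2 + 2))
    (by simpa using summable_inv_prime_pow_add_two)
  push_cast at h
  rw [tsum_inv_prime_pow_add_two] at h
  refine h.congr fun x => ?_
  rw [one_div, tsum_natCast_div_prime_pow_add_two]
end
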